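/- arXiv:2004.00711 — 3 statements merged into one kernel-verified Lean document; each statement's English description precedes it below -/
import Mathlib

section
/- Let y : ℝ → ℝ be continuously differentiable on [0, 1] with y(0) = 0, y(1) = 1, y(x) ≥ 0 and y′(x) ≥ 0 for all x in [0, 1]. Then ∫_0^1 y(x)·(y′(x))³ dx ≥ 27/64. -/
/-!
With `u = y ^ (4/3)` one has `u' = (4/3) y^(1/3) y'`, hence `y y'³ = (27/64) u'³`. Since `u'`
is nonnegative, the tangent line inequality `t³ ≥ 3c²t - 2c³` of the cube at `c = ∫ u'` gives
`∫ u'³ ≥ (∫ u')³ = (u 1 - u 0)³ = 1` (Jensen's inequality for `t ↦ t³`).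
-/

open Real intervalIntegral MeasureTheory Set Topology

lemma ae_restrict_Icc_of_forall_Ioo {μ : Measure ℝ} [NullSingletonClass μ] {p : ℝ → Prop} {a b : ℝ}
    (h : ∀ x ∈ Ioo a b, p x) : ∀ᵐ x ∂μ.restrict (Icc a b), p x := by
  rw [← Measure.restrict_congr_set Ioo_ae_eq_Icc]
  exact ae_restrict_of_forall_mem measurableSet_Ioo h

lemma pow_three_integral_div_le_integral_pow_three {f : ℝ → ℝ} {a b : ℝ} (hab : a < b)
    (hf : IntervalIntegrable f volume a b)
    (hf3 : IntervalIntegrable (fun x ↦ f x ^ 3) volume a b)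
    (hnonneg : 0 ≤ᵐ[volume.restrict (Icc a b)] f) :
    (∫ x in a..b, f x) ^ 3 / (b - a) ^ 2 ≤ ∫ x in a..b, f x ^ 3 := by
  have hba : 0 < b - a := sub_pos.2 hab
  set c := (∫ x in a..b, f x) / (b - a)
  have hc : 0 ≤ c := div_nonneg (integral_nonneg_of_ae_restrict hab.le hnonneg) hba.le
  have htangent : (fun x ↦ 3 * c ^ 2 * f x - 2 * c ^ 3) ≤ᵐ[volume.restrict (Icc a b)]
      fun x ↦ f x ^ 3 := by
    filter_upwards [hnonneg] with x hx
    nlinarith [mul_nonneg (sq_nonneg (f x - c)) (add_nonneg hx (mul_nonneg zero_le_two hc))]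
  have hmono_int := integral_mono_ae_restrict hab.le
    ((hf.const_mul _).sub intervalIntegrable_const) hf3 htangent
  have hfc : ∫ x in a..b, f x = c * (b - a) :=
    (div_mul_cancel₀ _ hba.ne').symm
  rw [integral_sub (hf.const_mul _) intervalIntegrable_const, intervalIntegral.integral_const_mul,
    intervalIntegral.integral_const, smul_eq_mul, hfc] at hmono_int
  rw [hfc, mul_pow, mul_div_assoc, pow_succ (b - a) 2, mul_div_cancel_left₀ _ (by positivity)]
  nlinarith

lemma mul_pow_three_eq_of_rpow_four_thirds {t s : ℝ} (ht : 0 ≤ t) :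
    t * s ^ 3 = 27 / 64 * (s * (4 / 3) * t ^ ((4 / 3 : ℝ) - 1)) ^ 3 := by
  have hcube : (t ^ ((4 / 3 : ℝ) - 1)) ^ 3 = t := by
    rw [show (4 / 3 : ℝ) - 1 = ((3 : ℕ) : ℝ)⁻¹ by norm_num]
    exact rpow_inv_natCast_pow ht three_ne_zero
  rw [mul_pow, mul_pow, hcube]
  ring

lemma ContDiffOn.hasDerivAt_derivWithin_Icc {y : ℝ → ℝ} {a b x : ℝ}
    (hy : ContDiffOn ℝ 1 y (Icc a b)) (hx : x ∈ Ioo a b) :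
    HasDerivAt y (derivWithin y (Icc a b) x) x := by
  have hnhds : Icc a b ∈ 𝓝 x := Icc_mem_nhds hx.1 hx.2
  rw [derivWithin_of_mem_nhds hnhds]
  exact ((hy.differentiableOn one_ne_zero) x (Ioo_subset_Icc_self hx)).differentiableAt
    hnhds |>.hasDerivAt

theorem div_le_integral_mul_deriv_pow_three {y : ℝ → ℝ} {a b : ℝ} (hab : a < b)
    (hy : ContDiffOn ℝ 1 y (Icc a b)) (hnonneg : ∀ x ∈ Icc a b, 0 ≤ y x)
    (hmono : ∀ x ∈ Ioo a b, 0 ≤ deriv y x) :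
    27 / 64 * (y b ^ (4 / 3 : ℝ) - y a ^ (4 / 3 : ℝ)) ^ 3 / (b - a) ^ 2 ≤
      ∫ x in a..b, y x * deriv y x ^ 3 := by
  -- `deriv y` may be junk at the endpoints; the one-sided derivative is continuous on `[a, b]`.
  set g := derivWithin y (Icc a b)
  have hg : ContinuousOn g (Icc a b) :=
    hy.continuousOn_derivWithin (uniqueDiffOn_Icc hab) le_rfl
  have hg_eq : ∀ x ∈ Ioo a b, g x = deriv y x := fun x hx ↦
    derivWithin_of_mem_nhds (Icc_mem_nhds hx.1 hx.2)
  set u' := fun x ↦ g x * (4 / 3) * y x ^ ((4 / 3 : ℝ) - 1)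
  have hu'_cont : ContinuousOn u' (Icc a b) :=
    (hg.mul continuousOn_const).mul
      (hy.continuousOn.rpow_const fun _ _ ↦ Or.inr (by norm_num))
  have hu'_int : IntervalIntegrable u' volume a b :=
    hu'_cont.intervalIntegrable_of_Icc hab.le
  have hu'_int3 : IntervalIntegrable (fun x ↦ u' x ^ 3) volume a b :=
    (hu'_cont.pow 3).intervalIntegrable_of_Icc hab.le
  have hFTC : ∫ x in a..b, u' x = y b ^ (4 / 3 : ℝ) - y a ^ (4 / 3 : ℝ) :=
    integral_eq_sub_of_hasDerivAt_of_le hab.le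
      (hy.continuousOn.rpow_const fun _ _ ↦ Or.inr (by norm_num))
      (fun x hx ↦ (hy.hasDerivAt_derivWithin_Icc hx).rpow_const (Or.inr (by norm_num))) hu'_int
  have hu'_nonneg : 0 ≤ᵐ[volume.restrict (Icc a b)] u' :=
    ae_restrict_Icc_of_forall_Ioo fun x hx ↦ by
      have := hnonneg x (Ioo_subset_Icc_self hx)
      have := hmono x hx
      simp only [Pi.zero_apply, u', hg_eq x hx]
      positivity
  have hintegrand : ∫ x in a..b, y x * deriv y x ^ 3 = 27 / 64 * ∫ x in a..b, u' x ^ 3 := by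
    rw [← intervalIntegral.integral_const_mul]
    refine integral_congr_ae_restrict ?_
    rw [uIoc_of_le hab.le]
    refine ae_restrict_of_ae_restrict_of_subset Ioc_subset_Icc_self
      (ae_restrict_Icc_of_forall_Ioo fun x hx ↦ ?_)
    simp only [u', ← hg_eq x hx]
    exact mul_pow_three_eq_of_rpow_four_thirds (hnonneg x (Ioo_subset_Icc_self hx))
  rw [hintegrand, ← hFTC, mul_div_assoc]
  gcongr
  exact pow_three_integral_div_le_integral_pow_three hab hu'_int hu'_int3 hu'_nonneg

/-- Minimum drag problem lower bound: any nonnegative nondecreasing C¹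
competitor with `y(0) = 0` and `y(1) = 1` satisfies `∫ y y′³ ≥ 27/64`. -/
theorem minimum_drag_lower_bound
    (y : ℝ → ℝ) (hy : ContDiffOn ℝ 1 y (Set.Icc 0 1))
    (h0 : y 0 = 0) (h1 : y 1 = 1)
    (hpos : ∀ x ∈ Set.Icc (0 : ℝ) 1, 0 ≤ y x)
    (hmono : ∀ x ∈ Set.Icc (0 : ℝ) 1, 0 ≤ deriv y x) :
    ∫ x in (0 : ℝ)..1, y x * (deriv y x) ^ 3 ≥ 27 / 64 := by
  have := div_le_integral_mul_deriv_pow_three zero_lt_one hy hpos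
    fun x hx ↦ hmono x (Ioo_subset_Icc_self hx)
  simpa [h0, h1, zero_rpow (show (4 / 3 : ℝ) ≠ 0 by norm_num)] using this
end

section
/- Let y₀(x) = sin(x)/sin(1) − x and let h : ℝ → ℝ be continuously differentiable on [0, 1] with h(0) = h(1) = 0. Then ∫_0^1 (((y₀ + h)′(x))² − ((y₀ + h)(x))² − 2·x·(y₀ + h)(x)) dx − ∫_0^1 ((y₀′(x))² − (y₀(x))² − 2·x·y₀(x)) dx = ∫_0^1 ((h′(x))² − (h(x))²) dx. -/
open Real intervalIntegral Set
open MeasureTheory (volume)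

/-!
Pointwise, the integrand of `J(y₀ + h) - J(y₀)` is `(h′² - h²) + 2 (y₀′ h′ - (y₀ + x) h)`.
Integrating the cross term by parts, the boundary terms vanish because `h(0) = h(1) = 0`, and
`∫ y₀′ h′ = -∫ y₀″ h = ∫ (y₀ + x) h` by the Euler–Lagrange equation `y₀″ = -(y₀ + x)`.
-/

namespace ContDiffOn

variable {a b x : ℝ} {f : ℝ → ℝ}

theorem hasDerivAt_deriv_of_mem_Ioo (hf : ContDiffOn ℝ 1 f (Icc a b)) (hx : x ∈ Ioo a b) :
    HasDerivAt f (deriv f x) x :=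
  ((hf.contDiffAt (Icc_mem_nhds hx.1 hx.2)).differentiableAt one_ne_zero).hasDerivAt

/-- `deriv f` is only pinned down on `Ioo a b`; there it agrees with `derivWithin f (Icc a b)`,
which is continuous on `Icc a b`. -/
theorem intervalIntegrable_comp_deriv (hf : ContDiffOn ℝ 1 f (Icc a b)) (hab : a < b)
    {F : ℝ → ℝ → ℝ → ℝ} (hF : Continuous fun q : ℝ × ℝ × ℝ => F q.1 q.2.1 q.2.2) :
    IntervalIntegrable (fun x => F x (f x) (deriv f x)) volume a b := by
  have hf' : ContinuousOn (derivWithin f (Icc a b)) (Icc a b) :=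
    hf.continuousOn_derivWithin (uniqueDiffOn_Icc hab) le_rfl
  have hcont : ContinuousOn (fun x => F x (f x) (derivWithin f (Icc a b) x)) (Icc a b) :=
    hF.comp_continuousOn (continuousOn_id.prodMk (hf.continuousOn.prodMk hf'))
  rw [intervalIntegrable_iff_integrableOn_Ioo_of_le hab.le]
  refine (hcont.integrableOn_Icc.mono_set Ioo_subset_Icc_self).congr_fun
    (fun x hx => ?_) measurableSet_Ioo
  simp only [derivWithin_of_mem_nhds (Icc_mem_nhds hx.1 hx.2)]

end ContDiffOn

theorem integral_mul_deriv_sub_mul_eq_zero {a b : ℝ} (hab : a < b) {u w v : ℝ → ℝ}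
    (hu : ∀ x, HasDerivAt u (-w x) x) (hw : Continuous w) (hv : ContDiffOn ℝ 1 v (Icc a b))
    (hva : v a = 0) (hvb : v b = 0) :
    ∫ x in a..b, (u x * deriv v x - w x * v x) = 0 := by
  have hu_cont : Continuous u := continuous_iff_continuousAt.2 fun x => (hu x).continuousAt
  have hv' : IntervalIntegrable (deriv v) volume a b :=
    hv.intervalIntegrable_comp_deriv hab (F := fun _ _ p => p) (by fun_prop)
  have hwv : IntervalIntegrable (fun x => w x * v x) volume a b :=
    (hw.continuousOn.mul hv.continuousOn).intervalIntegrable_of_Icc hab.le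
  rw [integral_sub (hv'.continuousOn_mul hu_cont.continuousOn) hwv,
    integral_mul_deriv_eq_deriv_mul_of_hasDerivAt hu_cont.continuousOn
      (uIcc_of_le hab.le ▸ hv.continuousOn) (fun x _ => hu x)
      (by simpa [hab.le] using fun x hx => hv.hasDerivAt_deriv_of_mem_Ioo hx)
      (hw.neg.intervalIntegrable a b) hv', hva, hvb]
  simp only [neg_mul, intervalIntegral.integral_neg]
  ring

/-- Exact quadratic-expansion identity for Example 5: perturbing the
Euler–Lagrange solution `y₀(x) = sin x / sin 1 - x` by an admissible `h`
changes the functional by exactly `∫ (h′² - h²)`. -/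
theorem example5_quadratic_expansion
    (h : ℝ → ℝ) (hh : ContDiffOn ℝ 1 h (Set.Icc 0 1))
    (hb0 : h 0 = 0) (hb1 : h 1 = 0) :
    (∫ x in (0 : ℝ)..1,
        ((deriv ((fun x : ℝ => Real.sin x / Real.sin 1 - x) + h) x) ^ 2 -
          (((fun x : ℝ => Real.sin x / Real.sin 1 - x) + h) x) ^ 2 -
          2 * x * ((fun x : ℝ => Real.sin x / Real.sin 1 - x) + h) x)) -
      (∫ x in (0 : ℝ)..1,
        ((deriv (fun x : ℝ => Real.sin x / Real.sin 1 - x) x) ^ 2 -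
          ((fun x : ℝ => Real.sin x / Real.sin 1 - x) x) ^ 2 -
          2 * x * (fun x : ℝ => Real.sin x / Real.sin 1 - x) x)) =
      ∫ x in (0 : ℝ)..1, ((deriv h x) ^ 2 - (h x) ^ 2) := by
  set y₀ : ℝ → ℝ := fun x => sin x / sin 1 - x
  set y₀' : ℝ → ℝ := fun x => cos x / sin 1 - 1
  have hy₀ (x : ℝ) : HasDerivAt y₀ (y₀' x) x :=
    ((hasDerivAt_sin x).div_const _).sub (hasDerivAt_id x)
  have euler_lagrange (x : ℝ) : HasDerivAt y₀' (-(y₀ x + x)) x :=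
    (((hasDerivAt_cos x).div_const (sin 1)).sub_const 1).congr_deriv (by simp only [y₀]; ring)
  have hint_L₀ :
      IntervalIntegrable (fun x => y₀' x ^ 2 - y₀ x ^ 2 - 2 * x * y₀ x) volume 0 1 :=
    Continuous.intervalIntegrable (by fun_prop) 0 1
  have hint_R : IntervalIntegrable (fun x => deriv h x ^ 2 - h x ^ 2) volume 0 1 :=
    hh.intervalIntegrable_comp_deriv zero_lt_one (F := fun _ y p => p ^ 2 - y ^ 2) (by fun_prop)
  have hint_C : IntervalIntegrable (fun x => y₀' x * deriv h x - (y₀ x + x) * h x) volume 0 1 :=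
    hh.intervalIntegrable_comp_deriv zero_lt_one
      (F := fun x y p => y₀' x * p - (y₀ x + x) * y) (by fun_prop)
  have first_variation : ∫ x in (0 : ℝ)..1, (y₀' x * deriv h x - (y₀ x + x) * h x) = 0 :=
    integral_mul_deriv_sub_mul_eq_zero zero_lt_one euler_lagrange (by fun_prop) hh hb0 hb1
  have expand :
      ∫ x in (0 : ℝ)..1, (deriv (y₀ + h) x ^ 2 - (y₀ + h) x ^ 2 - 2 * x * (y₀ + h) x) =
      ∫ x in (0 : ℝ)..1, ((y₀' x ^ 2 - y₀ x ^ 2 - 2 * x * y₀ x) +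
        ((deriv h x ^ 2 - h x ^ 2) + 2 * (y₀' x * deriv h x - (y₀ x + x) * h x))) := by
    refine integral_congr_Ioo_of_le zero_le_one fun x hx => ?_
    simp only [((hy₀ x).add (hh.hasDerivAt_deriv_of_mem_Ioo hx)).deriv, Pi.add_apply]
    ring
  rw [expand, integral_add hint_L₀ (hint_R.add (hint_C.const_mul 2)),
    integral_add hint_R (hint_C.const_mul 2), integral_const_mul, first_variation]
  simp only [(hy₀ _).deriv]
  ring
end

section
/- For every continuously differentiable function y : ℝ → ℝ on [0, 1] with y(0) = 0 and y(1) = 0, one has ∫_0^1 ((y′(x))² − (y(x))² − 2·x·y(x)) dx ≥ cot(1) − 2/3, where cot(1) = cos(1)/sin(1). -/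
open Real intervalIntegral

/-!
Write `y = e + h` with `e x = sin x / sin 1 - x`, which solves the Euler–Lagrange equation
`e'' = -(e + x)`, and let `w x = tan (1/2 - x)`, a solution of the Riccati equation
`w' = -(1 + w ^ 2)` on all of `[0, 1]` because `1 < π`. Completing the square gives
`L(x, y, y') = L(x, e, e') + (2 e' h + w h ^ 2)' + (h' - w h) ^ 2`, so integrating over `[0, 1]`,
where `h` vanishes at both ends, bounds the functional below by `∫ L(x, e, e') = cot 1 - 2/3`.
-/

open Set MeasureTheory

namespace Example5

def lagrangian (x y p : ℝ) : ℝ := p ^ 2 - y ^ 2 - 2 * x * y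

theorem lagrangian_add_eq {x e e' e'' w w' : ℝ} (he : e'' = -(e + x)) (hw : w' = -(1 + w ^ 2))
    (h h' : ℝ) :
    lagrangian x (e + h) (e' + h') =
      lagrangian x e e' + (2 * e'' * h + 2 * e' * h' + w' * h ^ 2 + 2 * w * h * h') +
        (h' - w * h) ^ 2 := by
  subst he hw
  unfold lagrangian
  ring

theorem integrableOn_comp_deriv {L : ℝ → ℝ → ℝ → ℝ}
    (hL : Continuous fun q : ℝ × ℝ × ℝ => L q.1 q.2.1 q.2.2) {y : ℝ → ℝ} {a b : ℝ} (hab : a < b)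
    (hy : ContDiffOn ℝ 1 y (Icc a b)) :
    IntegrableOn (fun x => L x (y x) (deriv y x)) (Icc a b) := by
  have hcont : ContinuousOn (fun x => L x (y x) (derivWithin y (Icc a b) x)) (Icc a b) :=
    hL.comp_continuousOn (continuousOn_id.prodMk (hy.continuousOn.prodMk
      (hy.continuousOn_derivWithin (uniqueDiffOn_Icc hab) le_rfl)))
  -- `deriv y` may take junk values at `a` and `b`, so compare with `derivWithin` on `Ioo a b` only.
  rw [integrableOn_Icc_iff_integrableOn_Ioo]
  refine (hcont.integrableOn_Icc.mono_set Ioo_subset_Icc_self).congr_fun (fun x hx => ?_)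
    measurableSet_Ioo
  simp only [derivWithin_of_mem_nhds (Icc_mem_nhds hx.1 hx.2)]

theorem hasDerivAt_tan_const_sub {c x : ℝ} (hx : cos (c - x) ≠ 0) :
    HasDerivAt (fun t => tan (c - t)) (-(1 + tan (c - x) ^ 2)) x := by
  refine ((hasDerivAt_tan hx).comp x ((hasDerivAt_id x).const_sub c)).congr_deriv ?_
  rw [one_div, ← inv_one_add_tan_sq hx, inv_inv]
  ring

theorem cos_one_half_sub_pos {x : ℝ} (hx : x ∈ Icc 0 1) : 0 < cos (1 / 2 - x) := by
  have := pi_gt_three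
  exact cos_pos_of_mem_Ioo ⟨by linarith [hx.2], by linarith [hx.1]⟩

theorem sin_one_pos : 0 < sin 1 :=
  sin_pos_of_pos_of_lt_pi one_pos (by linarith [pi_gt_three])

noncomputable def extremal (x : ℝ) : ℝ := sin x / sin 1 - x

noncomputable def extremalDeriv (x : ℝ) : ℝ := cos x / sin 1 - 1

noncomputable def extremalAction (x : ℝ) : ℝ :=
  sin (2 * x) / (2 * sin 1 ^ 2) - 2 * sin x / sin 1 + x + x ^ 3 / 3

theorem hasDerivAt_extremal (x : ℝ) : HasDerivAt extremal (extremalDeriv x) x :=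
  ((hasDerivAt_sin x).div_const _).sub (hasDerivAt_id x)

theorem hasDerivAt_extremalDeriv (x : ℝ) :
    HasDerivAt extremalDeriv (-(extremal x + x)) x := by
  refine (((hasDerivAt_cos x).div_const (sin 1)).sub_const 1).congr_deriv ?_
  rw [extremal]
  ring

theorem hasDerivAt_extremalAction (x : ℝ) :
    HasDerivAt extremalAction (lagrangian x (extremal x) (extremalDeriv x)) x := by
  have h2x := ((hasDerivAt_sin (2 * x)).comp x ((hasDerivAt_id x).const_mul 2)).div_const
    (2 * sin 1 ^ 2)
  refine (((h2x.sub ((hasDerivAt_sin x).const_mul 2 |>.div_const (sin 1))).add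
    (hasDerivAt_id x)).add ((hasDerivAt_pow 3 x).div_const 3)).congr_deriv ?_
  have hs := sin_one_pos.ne'
  simp only [lagrangian, extremal, extremalDeriv, cos_two_mul]
  field_simp
  push_cast
  linear_combination (3 : ℝ) * sin_sq_add_cos_sq x

theorem extremal_zero : extremal 0 = 0 := by
  simp [extremal]

theorem extremal_one : extremal 1 = 0 := by
  simp [extremal, sin_one_pos.ne']

theorem extremalAction_one_sub_zero :
    extremalAction 1 - extremalAction 0 = cos 1 / sin 1 - 2 / 3 := by
  have hs := sin_one_pos.ne'
  rw [extremalAction, extremalAction, sin_two_mul]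
  simp only [mul_zero, sin_zero]
  field_simp
  ring

noncomputable def calibration (y : ℝ → ℝ) (x : ℝ) : ℝ :=
  extremalAction x + 2 * extremalDeriv x * (y x - extremal x) +
    tan (1 / 2 - x) * (y x - extremal x) ^ 2

theorem calibration_of_eq_extremal {y : ℝ → ℝ} {x : ℝ} (h : y x = extremal x) :
    calibration y x = extremalAction x := by
  simp [calibration, h]

theorem continuousOn_calibration {y : ℝ → ℝ} (hy : ContinuousOn y (Icc 0 1)) :
    ContinuousOn (calibration y) (Icc 0 1) := by
  have htan : ContinuousOn (fun x : ℝ => tan (1 / 2 - x)) (Icc 0 1) := fun x hx =>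
    (continuousAt_tan.2 (cos_one_half_sub_pos hx).ne').comp_continuousWithinAt
      (continuousWithinAt_const.sub continuousWithinAt_id)
  unfold calibration extremalAction extremalDeriv extremal
  fun_prop

theorem hasDerivAt_calibration {y : ℝ → ℝ} {x p : ℝ} (hy : HasDerivAt y p x)
    (hx : cos (1 / 2 - x) ≠ 0) :
    HasDerivAt (calibration y)
      (lagrangian x (y x) p -
        (p - extremalDeriv x - tan (1 / 2 - x) * (y x - extremal x)) ^ 2) x := by
  have hh : HasDerivAt (fun t => y t - extremal t) (p - extremalDeriv x) x :=
    hy.sub (hasDerivAt_extremal x)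
  refine (((hasDerivAt_extremalAction x).add
    (((hasDerivAt_extremalDeriv x).const_mul 2).mul hh)).add
    ((hasDerivAt_tan_const_sub hx).mul (hh.fun_pow 2))).congr_deriv ?_
  have key := lagrangian_add_eq (x := x) (e := extremal x) (e' := extremalDeriv x)
    (w := tan (1 / 2 - x)) rfl rfl (y x - extremal x) (p - extremalDeriv x)
  rw [add_sub_cancel, add_sub_cancel] at key
  rw [key]
  push_cast
  ring

end Example5

open Example5 in
/-- Example 5 lower bound: any C¹ competitor with `y(0) = y(1) = 0` gives
functional value at least `cot 1 - 2/3`. -/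
theorem example5_lower_bound
    (y : ℝ → ℝ) (hy : ContDiffOn ℝ 1 y (Set.Icc 0 1))
    (h0 : y 0 = 0) (h1 : y 1 = 0) :
    ∫ x in (0 : ℝ)..1,
      ((deriv y x) ^ 2 - (y x) ^ 2 - 2 * x * y x) ≥
      Real.cos 1 / Real.sin 1 - 2 / 3 := by
  have hy' : ∀ x ∈ Ioo (0 : ℝ) 1, HasDerivAt y (deriv y x) x := fun x hx =>
    ((hy.differentiableOn one_ne_zero).differentiableAt (Icc_mem_nhds hx.1 hx.2)).hasDerivAt
  calc cos 1 / sin 1 - 2 / 3 = calibration y 1 - calibration y 0 := by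
        rw [calibration_of_eq_extremal (h1.trans extremal_one.symm),
          calibration_of_eq_extremal (h0.trans extremal_zero.symm), extremalAction_one_sub_zero]
    _ ≤ ∫ x in (0 : ℝ)..1, lagrangian x (y x) (deriv y x) :=
        sub_le_integral_of_hasDeriv_right_of_le zero_le_one
          (continuousOn_calibration hy.continuousOn)
          (fun x hx => (hasDerivAt_calibration (hy' x hx)
            (cos_one_half_sub_pos (Ioo_subset_Icc_self hx)).ne').hasDerivWithinAt)
          (integrableOn_comp_deriv (by unfold lagrangian; fun_prop) zero_lt_one hy)
          (fun x _ => sub_le_self _ (sq_nonneg _))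
end
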